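/- arXiv:1509.03674 — 2 statements merged into one kernel-verified Lean document; each statement's English description precedes it below -/
import Mathlib

section
/- (Injectivity of the eigenvalue map.) Let w be a weight matrix with sequence of monic orthogonal matrix polynomials p(x,n), and let δ, δ′ ∈ D(w). If p(x,n)·δ = p(x,n)·δ′ for every integer n ≥ 0 (i.e., δ and δ′ have the same eigenvalue sequence Λ_n), then q·δ = q·δ′ for every matrix polynomial q, i.e., δ = δ′ as operators. Consequently the eigenvalue map Λ : D(w) → M_N(ℂ[n]) sending δ to the polynomial Λ with p(x,n)·δ = Λ(n)p(x,n) is an injective algebra homomorphism onto its image E(w). -/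
open MeasureTheory Polynomial Matrix Set Filter Topology
open scoped ComplexOrder

/-- `N×N` complex matrices. -/
abbrev Mat (N : ℕ) := Matrix (Fin N) (Fin N) ℂ

/-- `N×N` matrices of complex polynomials (matrix polynomials). -/
abbrev MatPoly (N : ℕ) := Matrix (Fin N) (Fin N) (Polynomial ℂ)

/-- Evaluation of a matrix polynomial at a real point. -/
noncomputable def evalM {N : ℕ} (p : MatPoly N) (x : ℝ) : Mat N :=
  p.map fun q => q.eval (x : ℂ)

/-- Entrywise (formal) derivative of a matrix polynomial. -/
noncomputable def matD {N : ℕ} (p : MatPoly N) : MatPoly N :=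
  p.map fun q => Polynomial.derivative q

/-- Left multiplication of a matrix polynomial by a constant matrix. -/
noncomputable def csmul {N : ℕ} (Λ : Mat N) (p : MatPoly N) : MatPoly N :=
  Λ.map (Polynomial.C) * p

/-- Degree of a matrix polynomial (the sup of the degrees of its entries, `⊥` for `0`). -/
noncomputable def mdeg {N : ℕ} (p : MatPoly N) : WithBot ℕ :=
  Finset.univ.sup fun ij : Fin N × Fin N => (p ij.1 ij.2).degree

/-- The matrix of `n`-th coefficients of a matrix polynomial. -/
def coeffMat {N : ℕ} (p : MatPoly N) (n : ℕ) : Mat N :=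
  Matrix.of fun i j => (p i j).coeff n

/-- The scalar matrix polynomial `q·I`. -/
noncomputable def scalarM (N : ℕ) (q : Polynomial ℂ) : MatPoly N :=
  Matrix.diagonal fun _ => q

/-- Right action of the matrix differential operator `∑ ∂^i a i` (orders `0,…,ℓ`)
on a matrix polynomial: `p ↦ ∑ p⁽ⁱ⁾ * a i`. -/
noncomputable def act {N : ℕ} (a : ℕ → MatPoly N) (ℓ : ℕ) (p : MatPoly N) : MatPoly N :=
  ∑ i ∈ Finset.range (ℓ + 1), (matD)^[i] p * a i

/-- Entrywise derivative of a matrix-valued function on `ℝ`. -/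
noncomputable def mderiv {N : ℕ} (f : ℝ → Mat N) : ℝ → Mat N :=
  fun x => Matrix.of fun i j => deriv (fun t => f t i j) x

/-- The matrix-valued pairing `⟨f,g⟩_w = ∫ f(x) w(x) g(x)ᴴ dx` of matrix-valued functions. -/
noncomputable def fip {N : ℕ} (w : ℝ → Mat N) (f g : ℝ → Mat N) : Mat N :=
  Matrix.of fun i j => ∫ x : ℝ, (f x * w x * (g x)ᴴ) i j

/-- The matrix-valued inner product `⟨p,q⟩_w` of matrix polynomials. -/
noncomputable def mip {N : ℕ} (w : ℝ → Mat N) (p q : MatPoly N) : Mat N :=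
  fip w (evalM p) (evalM q)

/-- A weight matrix supported on `(x₀,x₁)`: vanishes off `(x₀,x₁)`, is entrywise smooth,
Hermitian and positive definite on `(x₀,x₁)`, and has finite moments. -/
structure IsWeightMatrix {N : ℕ} (w : ℝ → Mat N) (x₀ x₁ : ℝ) : Prop where
  lt : x₀ < x₁
  vanish : ∀ x ∉ Set.Ioo x₀ x₁, w x = 0
  smooth : ∀ i j, ContDiffOn ℝ (⊤ : ℕ∞) (fun x => w x i j) (Set.Ioo x₀ x₁)
  herm : ∀ x ∈ Set.Ioo x₀ x₁, (w x).IsHermitian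
  posdef : ∀ x ∈ Set.Ioo x₀ x₁, (w x).PosDef
  moments : ∀ m : ℕ, Integrable fun x : ℝ => |x| ^ m * ((w x).trace.re)

/-- A sequence of orthogonal matrix polynomials for `w`: `P n` has degree `n` with
nonsingular (invertible) leading coefficient, and distinct terms are `w`-orthogonal. -/
structure IsOMPseq {N : ℕ} (w : ℝ → Mat N) (P : ℕ → MatPoly N) : Prop where
  degle : ∀ n, ∀ i j, (P n i j).natDegree ≤ n
  lead : ∀ n, IsUnit (coeffMat (P n) n)
  orth : ∀ m n, m ≠ n → mip w (P m) (P n) = 0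

/-- The sequence of *monic* orthogonal matrix polynomials for `w`. -/
structure IsMonicOMP {N : ℕ} (w : ℝ → Mat N) (P : ℕ → MatPoly N) : Prop where
  degle : ∀ n, ∀ i j, (P n i j).natDegree ≤ n
  monic : ∀ n, coeffMat (P n) n = 1
  orth : ∀ m n, m ≠ n → mip w (P m) (P n) = 0

section EigenAux

variable {N : ℕ}

lemma matD_add (p q : MatPoly N) : matD (p + q) = matD p + matD q := by
  ext i j
  simp [matD, Matrix.add_apply]

lemma matD_iter_add (i : ℕ) (p q : MatPoly N) :
    (matD)^[i] (p + q) = (matD)^[i] p + (matD)^[i] q := by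
  induction i generalizing p q with
  | zero => simp
  | succ n ih => simp [Function.iterate_succ_apply, matD_add, ih]

lemma act_add (a : ℕ → MatPoly N) (ℓ : ℕ) (p q : MatPoly N) :
    act a ℓ (p + q) = act a ℓ p + act a ℓ q := by
  simp [act, matD_iter_add, add_mul, Finset.sum_add_distrib]

lemma matD_csmul (Λ : Mat N) (p : MatPoly N) : matD (csmul Λ p) = csmul Λ (matD p) := by
  ext i j
  simp [matD, csmul, Matrix.mul_apply, Polynomial.derivative_C_mul]

lemma matD_iter_csmul (i : ℕ) (Λ : Mat N) (p : MatPoly N) :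
    (matD)^[i] (csmul Λ p) = csmul Λ ((matD)^[i] p) := by
  induction i generalizing p with
  | zero => simp
  | succ n ih => rw [Function.iterate_succ_apply, Function.iterate_succ_apply,
      matD_csmul, ih]

lemma act_csmul (a : ℕ → MatPoly N) (ℓ : ℕ) (Λ : Mat N) (p : MatPoly N) :
    act a ℓ (csmul Λ p) = csmul Λ (act a ℓ p) := by
  simp only [act, matD_iter_csmul]
  rw [csmul, Finset.mul_sum]
  refine Finset.sum_congr rfl fun i _ => ?_
  rw [csmul, mul_assoc]

lemma coeffMat_csmul (Λ : Mat N) (p : MatPoly N) (m : ℕ) :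
    coeffMat (csmul Λ p) m = Λ * coeffMat p m := by
  ext i j
  simp [coeffMat, csmul, Matrix.mul_apply, Polynomial.finset_sum_coeff,
    Polynomial.coeff_C_mul]

lemma csmul_coeff_entry (Λ : Mat N) (p : MatPoly N) (m : ℕ) (i j : Fin N) :
    ((csmul Λ p) i j).coeff m = (Λ * coeffMat p m) i j := by
  have h := congrFun (congrFun (coeffMat_csmul Λ p m) i) j
  exact h

lemma coeffMat_P_high {w : ℝ → Mat N} {P : ℕ → MatPoly N} (hP : IsMonicOMP w P)
    (n m : ℕ) (h : n < m) : coeffMat (P n) m = 0 := by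
  ext i j
  exact Polynomial.coeff_eq_zero_of_natDegree_lt (lt_of_le_of_lt (hP.degle n i j) h)

lemma key_lemma {w : ℝ → Mat N} {P : ℕ → MatPoly N} (hP : IsMonicOMP w P)
    (ℓ ℓ' : ℕ) (a b : ℕ → MatPoly N)
    (heq : ∀ n, act a ℓ (P n) = act b ℓ' (P n)) :
    ∀ n, ∀ q : MatPoly N, (∀ i j m, n < m → (q i j).coeff m = 0) →
      act a ℓ q = act b ℓ' q := by
  intro n
  induction n with
  | zero =>
    intro q hq
    have hq0 : q = csmul (coeffMat q 0) (P 0) := by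
      ext i j m
      rw [csmul_coeff_entry]
      cases m with
      | zero =>
        rw [hP.monic 0, mul_one]
        rfl
      | succ m =>
        rw [coeffMat_P_high hP 0 (m + 1) (Nat.succ_pos m), mul_zero]
        simpa using hq i j (m + 1) (Nat.succ_pos m)
    rw [hq0, act_csmul, act_csmul, heq 0]
  | succ n ih =>
    intro q hq
    set Λ := coeffMat q (n + 1) with hΛ
    have hq' : ∀ i j m, n < m → ((q - csmul Λ (P (n + 1))) i j).coeff m = 0 := by
      intro i j m hm
      have hsub : ((q - csmul Λ (P (n + 1))) i j).coeff m
          = (q i j).coeff m - ((csmul Λ (P (n + 1))) i j).coeff m := by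
        simp [Matrix.sub_apply]
      rw [hsub, csmul_coeff_entry]
      rcases lt_or_ge (n + 1) m with hlt | hle
      · rw [hq i j m hlt, coeffMat_P_high hP (n + 1) m hlt, mul_zero,
          Matrix.zero_apply, sub_zero]
      · have hm' : m = n + 1 := le_antisymm hle hm
        subst hm'
        rw [hP.monic (n + 1), mul_one]
        show (coeffMat q (n + 1)) i j - Λ i j = 0
        rw [hΛ, sub_self]
    have hdecomp : q = (q - csmul Λ (P (n + 1))) + csmul Λ (P (n + 1)) := by
      abel
    calc act a ℓ q = act a ℓ ((q - csmul Λ (P (n + 1))) + csmul Λ (P (n + 1))) := by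
          rw [← hdecomp]
      _ = act a ℓ (q - csmul Λ (P (n + 1))) + act a ℓ (csmul Λ (P (n + 1))) :=
          act_add a ℓ _ _
      _ = act b ℓ' (q - csmul Λ (P (n + 1))) + act b ℓ' (csmul Λ (P (n + 1))) := by
          rw [ih _ hq', act_csmul, act_csmul, heq (n + 1)]
      _ = act b ℓ' ((q - csmul Λ (P (n + 1))) + csmul Λ (P (n + 1))) :=
          (act_add b ℓ' _ _).symm
      _ = act b ℓ' q := by rw [← hdecomp]

end EigenAux

/-- **Injectivity of the eigenvalue map.**  If `δ, δ′ ∈ D(w)` act identically on every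
monic orthogonal matrix polynomial `p(x,n)` (i.e. they have the same eigenvalue
sequence), then `δ = δ′` as operators: `q·δ = q·δ′` for every matrix polynomial `q`.
Hence the eigenvalue map `Λ : D(w) → M_N(ℂ[n])` is injective. -/
theorem eigenvalue_map_injective {N : ℕ} {x₀ x₁ : ℝ}
    (w : ℝ → Mat N) (hw : IsWeightMatrix w x₀ x₁)
    (P : ℕ → MatPoly N) (hP : IsMonicOMP w P)
    (ℓ ℓ' : ℕ) (a b : ℕ → MatPoly N)
    (heig : ∀ n, ∃ Λ : Mat N, act a ℓ (P n) = csmul Λ (P n))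
    (heig' : ∀ n, ∃ Λ : Mat N, act b ℓ' (P n) = csmul Λ (P n))
    (heq : ∀ n, act a ℓ (P n) = act b ℓ' (P n)) :
    ∀ q : MatPoly N, act a ℓ q = act b ℓ' q := by
  intro q
  apply key_lemma hP ℓ ℓ' a b heq
    (Finset.univ.sup fun ij : Fin N × Fin N => (q ij.1 ij.2).natDegree)
  intro i j m hm
  apply Polynomial.coeff_eq_zero_of_natDegree_lt
  exact lt_of_le_of_lt
    (Finset.le_sup (f := fun ij : Fin N × Fin N => (q ij.1 ij.2).natDegree)
      (Finset.mem_univ (i, j))) hm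
end

section
/- (Semiprimeness of D(w).) Let w be a weight matrix, and assume that every element of D(w) admits a w-adjoint lying in D(w). Then: (i) for every nonzero δ ∈ D(w) with w-adjoint δ†, the product δδ† is nonzero; (ii) every nonzero w-symmetric element of D(w) is non-nilpotent; (iii) D(w) is semiprime, i.e., D(w) has no nonzero nilpotent two-sided ideal. -/
open MeasureTheory Polynomial Matrix Set Filter Topology
open scoped ComplexOrder
set_option maxHeartbeats 1000000

/-- `T` is (the action of) a matrix differential operator with polynomial coefficients. -/
def IsDiffOpE {N : ℕ} (T : Module.End ℂ (MatPoly N)) : Prop :=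
  ∃ (k : ℕ) (a : ℕ → MatPoly N), ∀ p, T p = act a k p

/-- The algebra `D(w)`: the set of endomorphisms given by matrix differential operators
having the monic orthogonal matrix polynomials `P` of `w` as eigenfunctions. -/
def DWE {N : ℕ} (P : ℕ → MatPoly N) : Set (Module.End ℂ (MatPoly N)) :=
  {T | IsDiffOpE T ∧ ∀ n, ∃ Λ : Mat N, T (P n) = csmul Λ (P n)}

/-- `Td` is a `w`-adjoint of `T`. -/
def IsWAdjoint {N : ℕ} (w : ℝ → Mat N) (T Td : Module.End ℂ (MatPoly N)) : Prop :=
  ∀ p q : MatPoly N, mip w (T p) q = mip w p (Td q)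

lemma quad_single {N : ℕ} (M : Mat N) (k l : Fin N) (c d : ℂ) :
    star (Pi.single k c) ⬝ᵥ M *ᵥ (Pi.single l d) = star c * (M k l * d) := by
  classical
  simp [dotProduct, Matrix.mulVec_single, Pi.single_apply, apply_ite (starRingEnd ℂ),
    ite_mul, Finset.sum_ite_eq']

lemma quad_expand {N : ℕ} (M : Mat N) (k l : Fin N) (t : ℂ) :
    star (Pi.single k 1 + Pi.single l t) ⬝ᵥ M *ᵥ (Pi.single k 1 + Pi.single l t)
      = M k k + M k l * t + star t * M l k + star t * (M l l * t) := by
  classical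
  rw [star_add, add_dotProduct, Matrix.mulVec_add, dotProduct_add, dotProduct_add,
    quad_single, quad_single, quad_single, quad_single]
  simp only [star_one, one_mul]; ring

lemma psd_diag_re {N : ℕ} {M : Mat N} (h : M.PosSemidef) (k : Fin N) :
    0 ≤ M k k := by
  have := h.dotProduct_mulVec_nonneg (Pi.single k 1)
  simpa [dotProduct, Matrix.mulVec, Pi.single_apply] using this

lemma psd_trace_nonneg {N : ℕ} {M : Mat N} (h : M.PosSemidef) :
    0 ≤ M.trace.re := by
  rw [Matrix.trace, Complex.re_sum]
  exact Finset.sum_nonneg fun k _ => (Complex.le_def.mp (psd_diag_re h k)).1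

lemma psd_diag_le_trace {N : ℕ} {M : Mat N} (h : M.PosSemidef) (k : Fin N) :
    (M k k).re ≤ M.trace.re := by
  rw [Matrix.trace, Complex.re_sum]
  exact Finset.single_le_sum (f := fun l => (Matrix.diag M l).re)
    (fun l _ => (Complex.le_def.mp (psd_diag_re h l)).1) (Finset.mem_univ k)

lemma psd_entry_le_trace {N : ℕ} {M : Mat N} (h : M.PosSemidef) (k l : Fin N) :
    ‖M k l‖ ≤ M.trace.re := by
  by_cases hkl : k = l
  · subst hkl
    have h0 := psd_diag_re h k
    rw [Complex.le_def] at h0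
    have : ‖M k k‖ = (M k k).re := by
      rw [Complex.norm_def, Complex.normSq_apply, ← h0.2]
      simpa using Real.sqrt_mul_self h0.1
    rw [this]; exact psd_diag_le_trace h k
  · by_cases hz : M k l = 0
    · simp [hz, psd_trace_nonneg h]
    · set t : ℂ := -(starRingEnd ℂ) (M k l) / ‖M k l‖ with ht
      have hnt : ‖t‖ = 1 := by
        rw [ht]; rw [norm_div]
        simp only [norm_neg, RingHomIsometric.norm_map, Complex.norm_real, Real.norm_eq_abs,
          abs_norm]
        exact div_self (norm_ne_zero_iff.mpr hz)
      have key := h.dotProduct_mulVec_nonneg (Pi.single k 1 + Pi.single l t)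
      rw [quad_expand, Complex.le_def] at key
      have hlk : M l k = (starRingEnd ℂ) (M k l) := by
        have := h.1; exact (Matrix.IsHermitian.apply this l k).symm ▸ rfl
      have hr0 : (0:ℝ) < ‖M k l‖ := norm_pos_iff.mpr hz
      have h1 : M k l * t = -(‖M k l‖ : ℂ) := by
        rw [ht]
        rw [mul_div_assoc', mul_neg, Complex.mul_conj]
        rw [Complex.normSq_eq_norm_sq]
        push_cast
        rw [sq, neg_div, mul_self_div_self]
      have h2 : star t * M l k = -(‖M k l‖ : ℂ) := by
        rw [hlk, ht]
        simp only [star_div₀, map_div₀, map_neg, star_neg, Complex.star_def, Complex.conj_conj, Complex.conj_ofReal]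
        rw [div_mul_eq_mul_div, neg_mul, Complex.mul_conj, Complex.normSq_eq_norm_sq]
        push_cast
        rw [sq, neg_div, mul_self_div_self]
      have h3 : star t * (M l l * t) = M l l := by
        have : star t * (M l l * t) = M l l * (star t * t) := by ring
        rw [this, Complex.star_def, RCLike.conj_mul, hnt]
        norm_num
      rw [h1, h2, h3] at key
      have hre := key.1
      simp only [Complex.add_re, Complex.neg_re, Complex.ofReal_re, Complex.zero_re] at hre
      have hk := psd_diag_le_trace h k
      have hl := psd_diag_le_trace h l
      have htr := psd_trace_nonneg h
      nlinarith [hre, hk, hl]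

/-- The diagonal entry of `A W Aᴴ` as a quadratic form. -/
lemma diag_entry_as_quad {N : ℕ} (A W : Mat N) (i : Fin N) :
    (A * W * Aᴴ) i i = star (fun k => star (A i k)) ⬝ᵥ W *ᵥ (fun k => star (A i k)) := by
  simp only [Matrix.mul_apply, Matrix.conjTranspose_apply, dotProduct, Matrix.mulVec,
    Pi.star_apply, star_star, Finset.mul_sum, Finset.sum_mul]
  rw [Finset.sum_comm]
  congr 1; ext l; congr 1; ext k; ring


/-- KEY LEMMA: the inner product is definite. -/
lemma mip_self_eq_zero {N : ℕ} {x₀ x₁ : ℝ} {w : ℝ → Mat N} (hw : IsWeightMatrix w x₀ x₁)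
    {p : MatPoly N} (hpp : mip w p p = 0) : p = 0 := by
  classical
  set f : ℝ → Mat N := evalM p with hf
  set g : Fin N → ℝ → ℂ := fun i x => (f x * w x * (f x)ᴴ) i i with hg
  -- quadratic form representation
  have hquad : ∀ i x, g i x = star (fun k => star (f x i k)) ⬝ᵥ w x *ᵥ (fun k => star (f x i k)) :=
    fun i x => diag_entry_as_quad (f x) (w x) i
  -- nonnegativity
  have hpos : ∀ i x, 0 ≤ g i x := by
    intro i x
    by_cases hx : x ∈ Set.Ioo x₀ x₁
    · rw [hquad]; exact ((hw.posdef x hx).posSemidef).dotProduct_mulVec_nonneg _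
    · simp [hg, hw.vanish x hx]
  -- entry bound on w
  have hwb : ∀ (x : ℝ) (k l : Fin N), ‖w x k l‖ ≤ (w x).trace.re := by
    intro x k l
    by_cases hx : x ∈ Set.Ioo x₀ x₁
    · exact psd_entry_le_trace (hw.posdef x hx).posSemidef k l
    · simp [hw.vanish x hx]
  -- degree and coefficient bounds
  set d : ℕ := Finset.univ.sup fun ij : Fin N × Fin N => (p ij.1 ij.2).natDegree with hd
  set C : ℝ := ∑ ij : Fin N × Fin N, ∑ m ∈ Finset.range (d+1), ‖(p ij.1 ij.2).coeff m‖ with hC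
  have hC0 : 0 ≤ C := Finset.sum_nonneg fun _ _ => Finset.sum_nonneg fun _ _ => norm_nonneg _
  have hbase : ∀ x : ℝ, (1:ℝ) ≤ 1 + |x| := fun x => le_add_of_nonneg_right (abs_nonneg x)
  have heval : ∀ (i j : Fin N) (x : ℝ), ‖f x i j‖ ≤ C * (1+|x|)^d := by
    intro i j x
    have hdeg : (p i j).natDegree < d + 1 :=
      Nat.lt_succ_of_le (Finset.le_sup (f := fun ij : Fin N × Fin N => (p ij.1 ij.2).natDegree)
        (Finset.mem_univ (i, j)))
    have : f x i j = ∑ m ∈ Finset.range (d+1), (p i j).coeff m * (x:ℂ)^m := by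
      simp only [hf, evalM, Matrix.map_apply]
      exact Polynomial.eval_eq_sum_range' hdeg (x:ℂ)
    rw [this]
    calc ‖∑ m ∈ Finset.range (d+1), (p i j).coeff m * (x:ℂ)^m‖
        ≤ ∑ m ∈ Finset.range (d+1), ‖(p i j).coeff m * (x:ℂ)^m‖ := norm_sum_le _ _
      _ ≤ ∑ m ∈ Finset.range (d+1), ‖(p i j).coeff m‖ * (1+|x|)^d := by
          refine Finset.sum_le_sum fun m hm => ?_
          rw [norm_mul, norm_pow, Complex.norm_real, Real.norm_eq_abs]
          have hxm : |x|^m ≤ (1+|x|)^d :=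
            le_trans (pow_le_pow_left₀ (abs_nonneg x) (by linarith [abs_nonneg x]) m)
              (pow_le_pow_right₀ (hbase x) (Nat.lt_succ_iff.mp (Finset.mem_range.mp hm)))
          exact mul_le_mul_of_nonneg_left hxm (norm_nonneg _)
      _ = (∑ m ∈ Finset.range (d+1), ‖(p i j).coeff m‖) * (1+|x|)^d := by
          rw [Finset.sum_mul]
      _ ≤ C * (1+|x|)^d := by
          refine mul_le_mul_of_nonneg_right ?_ (by positivity)
          rw [hC]
          have := Finset.single_le_sum
            (f := fun ij : Fin N × Fin N => ∑ m ∈ Finset.range (d+1), ‖(p ij.1 ij.2).coeff m‖)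
            (fun _ _ => Finset.sum_nonneg fun _ _ => norm_nonneg _) (Finset.mem_univ (i,j))
          simpa using this
  -- bound on g
  have hgb : ∀ (i : Fin N) (x : ℝ),
      ‖g i x‖ ≤ (N:ℝ)^2 * C^2 * ((1+|x|)^(2*d) * (w x).trace.re) := by
    intro i x
    have htr : 0 ≤ (w x).trace.re := by
      by_cases hx : x ∈ Set.Ioo x₀ x₁
      · exact psd_trace_nonneg (hw.posdef x hx).posSemidef
      · simp [hw.vanish x hx]
    have hexp : g i x = ∑ l : Fin N, ∑ k : Fin N, f x i k * w x k l * star (f x i l) := by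
      simp only [hg, Matrix.mul_apply, Matrix.conjTranspose_apply, Finset.sum_mul]
    rw [hexp]
    calc ‖∑ l : Fin N, ∑ k : Fin N, f x i k * w x k l * star (f x i l)‖
        ≤ ∑ l : Fin N, ∑ k : Fin N, ‖f x i k * w x k l * star (f x i l)‖ := by
          refine (norm_sum_le _ _).trans (Finset.sum_le_sum fun l _ => norm_sum_le _ _)
      _ ≤ ∑ l : Fin N, ∑ k : Fin N, (C * (1+|x|)^d) * (w x).trace.re * (C * (1+|x|)^d) := by
          refine Finset.sum_le_sum fun l _ => Finset.sum_le_sum fun k _ => ?_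
          rw [norm_mul, norm_mul, norm_star]
          have h1 := heval i k x
          have h2 := heval i l x
          have h3 := hwb x k l
          have hbp : (0:ℝ) ≤ (1+|x|)^d := by positivity
          apply mul_le_mul
          · exact mul_le_mul h1 h3 (norm_nonneg _) (by positivity)
          · exact h2
          · exact norm_nonneg _
          · positivity
      _ = (N:ℝ)^2 * C^2 * ((1+|x|)^(2*d) * (w x).trace.re) := by
          rw [Finset.sum_const, Finset.sum_const]
          simp [Finset.card_univ]
          ring
  -- measurability of g
  have hgm : ∀ i : Fin N, AEStronglyMeasurable (g i) volume := by
    intro i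
    have hind : g i = Set.indicator (Set.Ioo x₀ x₁) (g i) := by
      ext x
      by_cases hx : x ∈ Set.Ioo x₀ x₁
      · rw [Set.indicator_of_mem hx]
      · rw [Set.indicator_of_notMem hx]; simp [hg, hw.vanish x hx]
    rw [hind, aestronglyMeasurable_indicator_iff measurableSet_Ioo]
    refine ContinuousOn.aestronglyMeasurable ?_ measurableSet_Ioo
    have hexp : ∀ x, g i x = ∑ l : Fin N, ∑ k : Fin N, f x i k * w x k l * star (f x i l) := by
      intro x
      simp only [hg, Matrix.mul_apply, Matrix.conjTranspose_apply, Finset.sum_mul]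
    have : ContinuousOn (fun x => ∑ l : Fin N, ∑ k : Fin N,
        f x i k * w x k l * star (f x i l)) (Set.Ioo x₀ x₁) := by
      refine continuousOn_finset_sum _ fun l _ => continuousOn_finset_sum _ fun k _ => ?_
      have hc1 : Continuous fun x : ℝ => f x i k :=
        (Polynomial.continuous (p i k)).comp Complex.continuous_ofReal
      have hc2 : Continuous fun x : ℝ => star (f x i l) :=
        ((Polynomial.continuous (p i l)).comp Complex.continuous_ofReal).star
      exact ((hc1.continuousOn.mul ((hw.smooth k l).continuousOn)).mul hc2.continuousOn)
    exact this.congr fun x _ => hexp x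
  -- integrability of g
  have hgi : ∀ i : Fin N, Integrable (g i) volume := by
    intro i
    have hmaj : Integrable (fun x : ℝ => (N:ℝ)^2 * C^2 * ((1+|x|)^(2*d) * (w x).trace.re))
        volume := by
      have hpow : ∀ x : ℝ, ((1+|x|)^(2*d) * (w x).trace.re)
          = ∑ m ∈ Finset.range (2*d+1), ((2*d).choose m : ℝ) * (|x|^m * (w x).trace.re) := by
        intro x
        rw [add_comm (1:ℝ) |x|, add_pow]
        rw [Finset.sum_mul]
        refine Finset.sum_congr rfl fun m hm => ?_
        ring
      have : Integrable (fun x : ℝ => ∑ m ∈ Finset.range (2*d+1),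
          ((2*d).choose m : ℝ) * (|x|^m * (w x).trace.re)) volume :=
        integrable_finset_sum _ fun m _ => (hw.moments m).const_mul _
      refine (this.const_mul ((N:ℝ)^2 * C^2)).congr (Eventually.of_forall fun x => ?_)
      simp only
      rw [← hpow x]
    exact Integrable.mono' hmaj (hgm i) (Eventually.of_forall fun x => hgb i x)
  -- the integrals vanish
  have hint : ∀ i : Fin N, ∫ x : ℝ, g i x = 0 := by
    intro i
    have : (mip w p p) i i = 0 := by rw [hpp]; rfl
    simpa [mip, fip, hg, hf] using this
  -- real parts a.e. zero
  have haez : ∀ i : Fin N, ∀ᵐ x : ℝ, (g i x).re = 0 := by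
    intro i
    have hre0 : ∫ x : ℝ, (g i x).re = 0 := by
      have := integral_re (hgi i)
      simp only [RCLike.re_to_complex] at this
      rw [this, hint i]
      rfl
    have hnn : 0 ≤ fun x : ℝ => (g i x).re := fun x => (Complex.le_def.mp (hpos i x)).1
    have := (integral_eq_zero_iff_of_nonneg hnn (hgi i).re).mp hre0
    filter_upwards [this] with x hx using hx
  have hae : ∀ᵐ x : ℝ, ∀ i : Fin N, (g i x).re = 0 := ae_all_iff.mpr haez
  -- the zero set
  obtain ⟨Z, hZnull, hZ⟩ : ∃ Z : Set ℝ, volume Z = 0 ∧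
      ∀ x ∉ Z, ∀ i : Fin N, (g i x).re = 0 := by
    refine ⟨{x | ¬ ∀ i : Fin N, (g i x).re = 0}, hae, fun x hx => not_not.mp ?_⟩
    · simpa using hx
  set A : Set ℝ := Set.Ioo x₀ x₁ \ Z with hA
  have hAvol : volume A ≠ 0 := by
    rw [hA, measure_diff_null hZnull, Real.volume_Ioo]
    exact (ENNReal.ofReal_pos.mpr (sub_pos.mpr hw.lt)).ne'
  have hAinf : A.Infinite := by
    intro hfin
    exact hAvol (hfin.measure_zero _)
  -- on A, f vanishes
  have hAzero : ∀ x ∈ A, ∀ i j : Fin N, f x i j = 0 := by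
    intro x hx i j
    have hxI : x ∈ Set.Ioo x₀ x₁ := hx.1
    have hxg : ∀ i : Fin N, (g i x).re = 0 := hZ x hx.2
    by_contra hne
    have hv : (fun k => star (f x i k)) ≠ 0 := by
      intro h0
      have := congrFun h0 j
      simp only [Pi.zero_apply, star_eq_zero] at this
      exact hne this
    have hlt := (hw.posdef x hxI).dotProduct_mulVec_pos hv
    rw [← hquad i x] at hlt
    have := (Complex.lt_def.mp hlt).1
    simp only [Complex.zero_re] at this
    exact absurd (hxg i) (by linarith)
  -- conclude: every entry polynomial vanishes
  refine Matrix.ext fun i j => ?_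
  rw [Matrix.zero_apply]
  apply Polynomial.eq_zero_of_infinite_isRoot
  have himg : ((fun x : ℝ => (x:ℂ)) '' A).Infinite :=
    hAinf.image (Set.injOn_of_injective Complex.ofReal_injective)
  refine himg.mono ?_
  rintro _ ⟨x, hx, rfl⟩
  have := hAzero x hx i j
  simpa [Polynomial.IsRoot, hf, evalM] using this

section semiprimeAux

variable {N : ℕ} {x₀ x₁ : ℝ} {w : ℝ → Mat N}

lemma mip_zero_right (p : MatPoly N) : mip w p (0 : MatPoly N) = 0 := by
  have h0 : ∀ x : ℝ, evalM (0 : MatPoly N) x = 0 := by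
    intro x; ext a b; simp [evalM]
  refine Matrix.ext fun i j => ?_
  simp [mip, fip, h0]

lemma mip_conj (hw : IsWeightMatrix w x₀ x₁) (p q : MatPoly N) :
    mip w q p = (mip w p q)ᴴ := by
  refine Matrix.ext fun i j => ?_
  simp only [mip, fip, Matrix.conjTranspose_apply, Matrix.of_apply]
  rw [RCLike.star_def, ← integral_conj]
  congr 1
  funext x
  have hpt : (starRingEnd ℂ) ((evalM p x * w x * (evalM q x)ᴴ) j i)
      = ((evalM p x * w x * (evalM q x)ᴴ)ᴴ) i j := rfl
  rw [hpt]
  rw [Matrix.conjTranspose_mul, Matrix.conjTranspose_mul, Matrix.conjTranspose_conjTranspose]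
  by_cases hx : x ∈ Set.Ioo x₀ x₁
  · rw [(hw.herm x hx).eq, Matrix.mul_assoc]
  · rw [hw.vanish x hx]
    simp

lemma wadjoint_symm (hw : IsWeightMatrix w x₀ x₁) {T Td : Module.End ℂ (MatPoly N)}
    (h : IsWAdjoint w T Td) : IsWAdjoint w Td T := by
  intro p q
  rw [mip_conj hw q (Td p), ← h q p, ← mip_conj hw (T q) p]

lemma adjoint_mul_self_eq_zero (hw : IsWeightMatrix w x₀ x₁)
    {T Td : Module.End ℂ (MatPoly N)} (h : IsWAdjoint w T Td)
    (h0 : Td * T = 0) : T = 0 := by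
  refine LinearMap.ext fun p => ?_
  have h1 : mip w (T p) (T p) = mip w p (Td (T p)) := h p (T p)
  have h2 : Td (T p) = 0 := by
    have : Td (T p) = (Td * T) p := rfl
    rw [this, h0]; rfl
  rw [h2, mip_zero_right] at h1
  have := mip_self_eq_zero hw h1
  simpa using this

lemma wadjoint_pow (hw : IsWeightMatrix w x₀ x₁) {T : Module.End ℂ (MatPoly N)}
    (h : IsWAdjoint w T T) : ∀ j : ℕ, IsWAdjoint w (T ^ j) (T ^ j) := by
  intro j
  induction j with
  | zero => intro p q; simp
  | succ j ih =>
      intro p q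
      have e1 : (T ^ (j+1)) p = (T ^ j) (T p) := by
        rw [pow_succ]; rfl
      have e2 : (T ^ (j+1)) q = T ((T ^ j) q) := by
        rw [pow_succ']; rfl
      rw [e1, e2, ih (T p) q, h p ((T ^ j) q)]

lemma symm_not_nilpotent (hw : IsWeightMatrix w x₀ x₁) {T : Module.End ℂ (MatPoly N)}
    (h : IsWAdjoint w T T) : ∀ k : ℕ, 0 < k → T ^ k = 0 → T = 0 := by
  intro k
  induction k using Nat.strong_induction_on with
  | _ k ih =>
    intro hk h0
    rcases Nat.lt_or_ge k 2 with hk2 | hk2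
    · interval_cases k
      · simpa using h0
    · set j : ℕ := (k + 1) / 2 with hj
      have hj1 : 0 < j := by omega
      have hjk : j < k := by omega
      have h2j : k ≤ 2 * j := by omega
      have hTj : T ^ (2 * j) = 0 := by
        have : T ^ (2 * j) = T ^ k * T ^ (2 * j - k) := by
          rw [← pow_add]; congr 1; omega
        rw [this, h0, zero_mul]
      have hzero : T ^ j = 0 := by
        refine LinearMap.ext fun p => ?_
        have h1 : mip w ((T ^ j) p) ((T ^ j) p) = mip w p ((T ^ j) ((T ^ j) p)) :=
          wadjoint_pow hw h j p ((T ^ j) p)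
        have h2 : (T ^ j) ((T ^ j) p) = 0 := by
          have : (T ^ j) ((T ^ j) p) = (T ^ (2 * j)) p := by
            rw [two_mul, pow_add]; rfl
          rw [this, hTj]; rfl
        rw [h2, mip_zero_right] at h1
        have := mip_self_eq_zero hw h1
        simpa using this
      exact ih j hjk hj1 hzero

end semiprimeAux

/-- **Semiprimeness of `D(w)`.**  Assume every element of `D(w)` has a `w`-adjoint in
`D(w)`.  Then (i) `δδ† ≠ 0` for nonzero `δ ∈ D(w)`; (ii) nonzero `w`-symmetric elements
of `D(w)` are not nilpotent; (iii) `D(w)` has no nonzero nilpotent two-sided ideal. -/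
theorem DW_semiprime {N : ℕ} {x₀ x₁ : ℝ}
    (w : ℝ → Mat N) (hw : IsWeightMatrix w x₀ x₁)
    (P : ℕ → MatPoly N) (hP : IsMonicOMP w P)
    (hadj : ∀ T ∈ DWE P, ∃ Td ∈ DWE P, IsWAdjoint w T Td) :
    -- (i): δδ† ≠ 0 for δ ≠ 0 (note p·(δδ†) = Td (T p), i.e. δδ† acts as Td * T):
    (∀ T ∈ DWE P, T ≠ 0 → ∀ Td : Module.End ℂ (MatPoly N),
      IsWAdjoint w T Td → Td * T ≠ 0) ∧
    -- (ii): nonzero w-symmetric elements are not nilpotent: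
    (∀ T ∈ DWE P, IsWAdjoint w T T → T ≠ 0 → ∀ m : ℕ, 0 < m → T ^ m ≠ 0) ∧
    -- (iii): D(w) is semiprime:
    (∀ S : Set (Module.End ℂ (MatPoly N)),
      S ⊆ DWE P →
      (0 : Module.End ℂ (MatPoly N)) ∈ S →
      (∀ x ∈ S, ∀ y ∈ S, x + y ∈ S) →
      (∀ x ∈ S, -x ∈ S) →
      (∀ d ∈ DWE P, ∀ x ∈ S, d * x ∈ S ∧ x * d ∈ S) →
      (∃ m : ℕ, 0 < m ∧ ∀ f : Fin m → Module.End ℂ (MatPoly N),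
        (∀ i, f i ∈ S) → (List.ofFn f).prod = 0) →
      S ⊆ {0}) := by
  classical
  have part1 : ∀ T ∈ DWE P, T ≠ 0 → ∀ Td : Module.End ℂ (MatPoly N),
      IsWAdjoint w T Td → Td * T ≠ 0 := by
    intro T _ hT0 Td hTd h0
    exact hT0 (adjoint_mul_self_eq_zero hw hTd h0)
  have part2 : ∀ T ∈ DWE P, IsWAdjoint w T T → T ≠ 0 → ∀ m : ℕ, 0 < m → T ^ m ≠ 0 := by
    intro T _ hsym hT0 m hm h0
    exact hT0 (symm_not_nilpotent hw hsym m hm h0)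
  refine ⟨part1, part2, ?_⟩
  intro S hSD h0S hadd hneg hideal ⟨m, hm, hprod⟩ z hz
  obtain ⟨zd, hzdD, hzadj⟩ := hadj z (hSD hz)
  set u : Module.End ℂ (MatPoly N) := zd * z with hu
  have huS : u ∈ S := (hideal zd hzdD z hz).1
  have husym : IsWAdjoint w u u := by
    intro p q
    have e1 : u p = zd (z p) := rfl
    have e2 : u q = zd (z q) := rfl
    rw [e1, e2, wadjoint_symm hw hzadj (z p) q, hzadj p (z q)]
  have hupow : u ^ m = 0 := by
    have := hprod (fun _ => u) (fun _ => huS)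
    rwa [List.ofFn_const, List.prod_replicate] at this
  have hu0 : u = 0 := by
    by_contra hne
    exact part2 u (hSD huS) husym hne m hm hupow
  have hz0 : z = 0 := adjoint_mul_self_eq_zero hw hzadj hu0
  simpa using hz0
end
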